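/- arXiv:1411.2300 — 8 statements merged into one kernel-verified Lean document; each statement's English description precedes it below -/
import Mathlib

section
/- The permutation σ = (1 3 2 4)(5 6)(7 9 10 8) of {1,…,11} is an automorphism of the combinatorics K (i.e. for every S ∈ P, σ(S) ∈ P), and σ has order 4 in the symmetric group on {1,…,11}. -/
open Finset

/-- The point set `P` of the combinatorics `K` on the line set `{1,…,11}`. -/
def Kpoints : Finset (Finset ℕ) :=
  { {1,2}, {1,3,5,7}, {1,4,6,8}, {1,9}, {1,10,11}, {2,3,6,9}, {2,4,5,10},
    {2,7,11}, {2,8}, {3,4}, {3,8,11}, {3,10}, {4,7}, {4,9,11}, {5,6},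
    {5,8,9}, {5,11}, {6,7,10}, {6,11}, {7,8}, {7,9}, {8,10}, {9,10} }

/-- An automorphism of `K`: a permutation of `{1,…,11}` (viewed as a permutation of `ℕ`
fixing everything outside `{1,…,11}`) sending every member of `P` to a member of `P`. -/
def IsAutoK (φ : Equiv.Perm ℕ) : Prop :=
  (∀ n : ℕ, n ∉ Finset.Icc 1 11 → φ n = n) ∧
  ∀ S ∈ Kpoints, S.image φ ∈ Kpoints

/-- The permutation `σ = (1 3 2 4)(5 6)(7 9 10 8)`. -/
def sigmaK : Equiv.Perm ℕ :=
  ([1,3,2,4] : List ℕ).formPerm * ([5,6] : List ℕ).formPerm *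
    ([7,9,10,8] : List ℕ).formPerm

/-!
σ is the product of the pairwise disjoint cycles (1 3 2 4), (5 6), (7 9 10 8), whose lengths all
divide 4, so σ⁴ = 1; since σ² sends 1 to 2, the order of σ is exactly 4. That σ maps every point
of K to a point of K is a finite check.
-/

theorem List.Disjoint.formPerm {α : Type*} [DecidableEq α] {l l' : List α} (h : l.Disjoint l') :
    l.formPerm.Disjoint l'.formPerm := fun x => by
  by_cases hx : x ∈ l
  · exact .inr (List.formPerm_apply_of_notMem fun hx' => h hx hx')
  · exact .inl (List.formPerm_apply_of_notMem hx)

theorem Equiv.Perm.Disjoint.mul_pow_eq_one {α : Type*} {f g : Equiv.Perm α} {n : ℕ}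
    (h : f.Disjoint g) (hf : f ^ n = 1) (hg : g ^ n = 1) : (f * g) ^ n = 1 := by
  rw [h.commute.mul_pow, hf, hg, one_mul]

theorem List.formPerm_pow_eq_one_of_length_dvd {α : Type*} [DecidableEq α] {l : List α} {n : ℕ}
    (hl : l.Nodup) (hn : l.length ∣ n) : l.formPerm ^ n = 1 := by
  obtain ⟨k, rfl⟩ := hn
  rw [pow_mul, formPerm_pow_length_eq_one_of_nodup _ hl, one_pow]

lemma sigmaK_apply_of_notMem_Icc {n : ℕ} (hn : n ∉ Icc 1 11) : sigmaK n = n := by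
  have : n = 0 ∨ 11 < n := by grind
  simp only [sigmaK, Equiv.Perm.mul_apply]
  rw [List.formPerm_apply_of_notMem (l := [7, 9, 10, 8]) (by grind),
    List.formPerm_apply_of_notMem (l := [5, 6]) (by grind),
    List.formPerm_apply_of_notMem (by grind)]

lemma image_sigmaK_mem_Kpoints : ∀ S ∈ Kpoints, S.image sigmaK ∈ Kpoints := by decide

lemma sigmaK_pow_four : sigmaK ^ 4 = 1 := by
  refine Equiv.Perm.Disjoint.mul_pow_eq_one ?_ (Equiv.Perm.Disjoint.mul_pow_eq_one ?_ ?_ ?_) ?_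
  · exact .mul_left (List.Disjoint.formPerm (by simp)) (List.Disjoint.formPerm (by simp))
  · exact List.Disjoint.formPerm (by simp)
  all_goals exact List.formPerm_pow_eq_one_of_length_dvd (by decide) (by decide)

lemma sigmaK_sq_ne_one : sigmaK ^ 2 ≠ 1 := fun h =>
  absurd (congrArg (· 1) h) (by decide)

theorem stmt0 : IsAutoK sigmaK ∧ orderOf sigmaK = 4 :=
  ⟨⟨fun _ => sigmaK_apply_of_notMem_Icc, image_sigmaK_mem_Kpoints⟩,
    orderOf_eq_prime_pow (p := 2) (n := 1) sigmaK_sq_ne_one sigmaK_pow_four⟩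
end

section
/- A permutation φ of {1,…,11} is an automorphism of the combinatorics K if and only if φ ∈ {id, σ, σ², σ³}, where σ = (1 3 2 4)(5 6)(7 9 10 8). Consequently the automorphism group of K is cyclic of order 4, generated by σ. -/
open Finset

/-!
Individualization and refinement. An automorphism fixing a set `F` of lines pointwise preserves,
for every line `x`, the set of pairs `(S ∩ F, |S|)` over the points `S ∋ x`; so it also fixes
every line whose profile is unique. Refining from `F = ∅` fixes line `11`, and then the profile
of line `1` relative to `{11}` is shared exactly by the lines `1, 2, 3, 4`. Refining twice from
`F = {1}` fixes everything, so an automorphism is determined by the image of line `1`, and the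
four powers of `σ` realize the four possible images.
-/

lemma Finset.image_inter_eq_of_forall_mem_apply_eq {α : Type*} [DecidableEq α]
    (φ : Equiv.Perm α) {F : Finset α} (hF : ∀ a ∈ F, φ a = a) (S : Finset α) :
    S.image φ ∩ F = S ∩ F := by
  ext y
  simp only [mem_inter, mem_image]
  constructor
  · rintro ⟨⟨s, hs, rfl⟩, hy⟩
    have hfix : φ s = s := φ.injective (hF _ hy)
    rw [hfix] at hy ⊢
    exact ⟨hs, hy⟩
  · rintro ⟨hy, hyF⟩
    exact ⟨⟨y, hy, hF y hyF⟩, hyF⟩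

lemma isAutoK_one : IsAutoK 1 :=
  ⟨fun _ _ => rfl, fun S hS => by simpa using hS⟩

lemma isAutoK_sigmaK : IsAutoK sigmaK := by
  refine ⟨fun n hn => ?_, by decide⟩
  have hfix (l : List ℕ) (hl : ∀ a ∈ l, a ∈ Icc 1 11) : l.formPerm n = n :=
    List.formPerm_apply_of_notMem fun hmem => hn (hl n hmem)
  rw [sigmaK, Equiv.Perm.mul_apply, Equiv.Perm.mul_apply, hfix [7, 9, 10, 8] (by decide),
    hfix [5, 6] (by decide), hfix [1, 3, 2, 4] (by decide)]

def lineProfile (F : Finset ℕ) (x : ℕ) : Finset (Finset ℕ × ℕ) :=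
  (Kpoints.filter (x ∈ ·)).image fun S => (S ∩ F, S.card)

def profileClass (F : Finset ℕ) (x : ℕ) : Finset ℕ :=
  {y ∈ Icc 1 11 | lineProfile F y = lineProfile F x}

def refineFixed (F : Finset ℕ) : Finset ℕ :=
  F ∪ {x ∈ Icc 1 11 | profileClass F x = {x}}

namespace IsAutoK

variable {φ ψ : Equiv.Perm ℕ} {F : Finset ℕ}

lemma mapsTo (h : IsAutoK φ) {x : ℕ} (hx : x ∈ Icc 1 11) : φ x ∈ Icc 1 11 := by
  by_contra hφx
  rw [φ.injective (h.1 _ hφx)] at hφx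
  exact hφx hx

lemma image_image_Kpoints (h : IsAutoK φ) : Kpoints.image (·.image φ) = Kpoints :=
  eq_of_subset_of_card_le (image_subset_iff.2 h.2)
    (card_image_of_injective _ (image_injective φ.injective)).ge

lemma inv (h : IsAutoK φ) : IsAutoK φ⁻¹ := by
  refine ⟨fun n hn => Equiv.Perm.inv_eq_iff_eq.2 (h.1 n hn).symm, fun T hT => ?_⟩
  rw [← h.image_image_Kpoints] at hT
  obtain ⟨S, hS, rfl⟩ := mem_image.1 hT
  simpa [image_image] using hS

lemma mul (hφ : IsAutoK φ) (hψ : IsAutoK ψ) : IsAutoK (φ * ψ) := by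
  refine ⟨fun n hn => by rw [Equiv.Perm.mul_apply, hψ.1 n hn, hφ.1 n hn], fun S hS => ?_⟩
  rw [Equiv.Perm.coe_mul, ← image_image]
  exact hφ.2 _ (hψ.2 S hS)

lemma pow (h : IsAutoK φ) (n : ℕ) : IsAutoK (φ ^ n) := by
  induction n with
  | zero => exact isAutoK_one
  | succ n ih => rw [pow_succ]; exact ih.mul h

lemma lineProfile_subset_apply (h : IsAutoK φ) (hF : ∀ a ∈ F, φ a = a) (x : ℕ) :
    lineProfile F x ⊆ lineProfile F (φ x) := by
  intro p hp
  simp only [lineProfile, mem_image, mem_filter] at hp ⊢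
  obtain ⟨S, ⟨hS, hxS⟩, rfl⟩ := hp
  refine ⟨S.image φ, ⟨h.2 S hS, mem_image_of_mem φ hxS⟩, ?_⟩
  rw [image_inter_eq_of_forall_mem_apply_eq φ hF, card_image_of_injective _ φ.injective]

lemma lineProfile_apply (h : IsAutoK φ) (hF : ∀ a ∈ F, φ a = a) (x : ℕ) :
    lineProfile F (φ x) = lineProfile F x := by
  have hF' : ∀ a ∈ F, φ⁻¹ a = a := fun a ha => Equiv.Perm.inv_eq_iff_eq.2 (hF a ha).symm
  refine (Subset.antisymm (h.lineProfile_subset_apply hF x) ?_).symm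
  simpa using h.inv.lineProfile_subset_apply hF' (φ x)

lemma apply_mem_profileClass (h : IsAutoK φ) (hF : ∀ a ∈ F, φ a = a) {x : ℕ}
    (hx : x ∈ Icc 1 11) : φ x ∈ profileClass F x :=
  mem_filter.2 ⟨h.mapsTo hx, h.lineProfile_apply hF x⟩

lemma apply_eq_of_mem_refineFixed (h : IsAutoK φ) (hF : ∀ a ∈ F, φ a = a) :
    ∀ a ∈ refineFixed F, φ a = a := by
  intro a ha
  rcases mem_union.1 ha with ha | ha
  · exact hF a ha
  · obtain ⟨hx, hclass⟩ := mem_filter.1 ha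
    simpa [hclass] using h.apply_mem_profileClass hF hx

lemma apply_eleven (h : IsAutoK φ) : φ 11 = 11 :=
  h.apply_eq_of_mem_refineFixed (F := ∅) (by simp) 11 (by decide)

lemma apply_one_mem (h : IsAutoK φ) : φ 1 ∈ ({1, 2, 3, 4} : Finset ℕ) := by
  have hclass := h.apply_mem_profileClass (F := {11}) (by simpa using h.apply_eleven)
    (show 1 ∈ Icc 1 11 by decide)
  rwa [show profileClass {11} 1 = {1, 2, 3, 4} by decide] at hclass

lemma eq_one_of_apply_one (h : IsAutoK φ) (h1 : φ 1 = 1) : φ = 1 := by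
  have hfix := h.apply_eq_of_mem_refineFixed (h.apply_eq_of_mem_refineFixed (F := {1}) (by simpa))
  rw [show refineFixed (refineFixed {1}) = Icc 1 11 by decide] at hfix
  ext n
  by_cases hn : n ∈ Icc 1 11
  · exact hfix n hn
  · exact h.1 n hn

lemma eq_of_apply_one_eq (hφ : IsAutoK φ) (hψ : IsAutoK ψ)
    (h1 : φ 1 = ψ 1) : φ = ψ :=
  (inv_mul_eq_one.1 ((hψ.inv.mul hφ).eq_one_of_apply_one (by simp [h1]))).symm

lemma exists_eq_sigmaK_pow (h : IsAutoK φ) : ∃ k < 4, φ = sigmaK ^ k := by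
  have hσ : ∀ y ∈ ({1, 2, 3, 4} : Finset ℕ), ∃ k < 4, (sigmaK ^ k) 1 = y := by decide
  obtain ⟨k, hk, hk1⟩ := hσ _ h.apply_one_mem
  exact ⟨k, hk, h.eq_of_apply_one_eq (isAutoK_sigmaK.pow k) hk1.symm⟩

end IsAutoK

/-- The automorphisms of `K` are exactly `1, σ, σ², σ³`; in particular the automorphism
group of `K` is cyclic of order 4, generated by `σ`. -/
theorem stmt1 :
    (∀ φ : Equiv.Perm ℕ, IsAutoK φ ↔
      (φ = 1 ∨ φ = sigmaK ∨ φ = sigmaK ^ 2 ∨ φ = sigmaK ^ 3)) ∧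
    orderOf sigmaK = 4 := by
  refine ⟨fun φ => ⟨fun h => ?_, ?_⟩, ?_⟩
  · obtain ⟨k, hk, rfl⟩ := h.exists_eq_sigmaK_pow
    interval_cases k <;> simp
  · rintro (rfl | rfl | rfl | rfl)
    exacts [isAutoK_one, isAutoK_sigmaK, isAutoK_sigmaK.pow 2, isAutoK_sigmaK.pow 3]
  · have : Fact (Nat.Prime 2) := ⟨Nat.prime_two⟩
    refine orderOf_eq_prime_pow (p := 2) (n := 1) (fun h => ?_) ?_
    · exact absurd congr($h 1) (by decide)
    · exact (isAutoK_sigmaK.pow 4).eq_of_apply_one_eq isAutoK_one (by decide)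
end

section
/- Every automorphism φ of the combinatorics K maps each of the sets {1,2,3,4}, {5,6}, {7,8,9,10} and {11} onto itself; that is, the decomposition of {1,…,11} into φ-orbits refines the partition {1,2,3,4} ⊔ {5,6} ⊔ {7,8,9,10} ⊔ {11}. -/
open Finset

/-- number of points of cardinality `k` containing `x` -/
def degK (k x : ℕ) : ℕ := (Kpoints.filter (fun S => x ∈ S ∧ S.card = k)).card

/-- Every automorphism of `K` maps each of `{1,2,3,4}`, `{5,6}`, `{7,8,9,10}`, `{11}`
onto itself: the `φ`-orbit decomposition refines this partition of `{1,…,11}`. -/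
theorem stmt3 (φ : Equiv.Perm ℕ) (hφ : IsAutoK φ) :
    Finset.image φ {1, 2, 3, 4} = ({1, 2, 3, 4} : Finset ℕ) ∧
    Finset.image φ {5, 6} = ({5, 6} : Finset ℕ) ∧
    Finset.image φ {7, 8, 9, 10} = ({7, 8, 9, 10} : Finset ℕ) ∧
    Finset.image φ {11} = ({11} : Finset ℕ) := by
  obtain ⟨hfix, hmap⟩ := hφ
  have hinj : Function.Injective φ := φ.injective
  have himginj : ∀ a ∈ Kpoints, ∀ b ∈ Kpoints,
      a.image φ = b.image φ → a = b :=
    fun a _ b _ h => Finset.image_injective hinj h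
  have hbij : Kpoints.image (fun S => S.image φ) = Kpoints := by
    apply Finset.eq_of_subset_of_card_le
    · intro T hT
      obtain ⟨S, hS, rfl⟩ := Finset.mem_image.mp hT
      exact hmap S hS
    · rw [Finset.card_image_of_injOn himginj]
  have hdeg : ∀ k x, degK k (φ x) = degK k x := by
    intro k x
    unfold degK
    conv_lhs => rw [← hbij]
    rw [Finset.filter_image,
      Finset.card_image_of_injOn (fun a ha b hb h =>
        himginj a (Finset.mem_filter.mp ha).1 b (Finset.mem_filter.mp hb).1 h)]
    apply congrArg Finset.card
    apply Finset.filter_congr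
    intro S _
    simp [Finset.mem_image, hinj.eq_iff, Finset.card_image_of_injective _ hinj]
  have hIcc : ∀ x ∈ Finset.Icc (1:ℕ) 11, φ x ∈ Finset.Icc (1:ℕ) 11 := by
    intro x hx
    by_contra h
    have h2 := hfix (φ x) h
    have := hinj h2
    rw [this] at h
    exact h hx
  have class11 : φ 11 = 11 := by
    have key : ∀ y ∈ Finset.Icc (1:ℕ) 11, degK 3 y = 4 → y = 11 := by decide
    exact key _ (hIcc 11 (by decide)) (by rw [hdeg]; decide)
  have class16 : ∀ x ∈ ({1,2,3,4,5,6} : Finset ℕ), φ x ∈ ({1,2,3,4,5,6} : Finset ℕ) := by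
    intro x hx
    have key : ∀ y ∈ Finset.Icc (1:ℕ) 11, degK 4 y = 2 → y ∈ ({1,2,3,4,5,6} : Finset ℕ) := by
      decide
    apply key _ (hIcc x (by fin_cases hx <;> decide))
    rw [hdeg]; fin_cases hx <;> decide
  have class78910 : ∀ x ∈ ({7,8,9,10} : Finset ℕ), φ x ∈ ({7,8,9,10} : Finset ℕ) := by
    intro x hx
    have key : ∀ y ∈ Finset.Icc (1:ℕ) 11, degK 4 y = 1 → y ∈ ({7,8,9,10} : Finset ℕ) := by
      decide
    apply key _ (hIcc x (by fin_cases hx <;> decide))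
    rw [hdeg]; fin_cases hx <;> decide
  have class56 : ∀ x ∈ ({5,6} : Finset ℕ), φ x ∈ ({5,6} : Finset ℕ) := by
    intro x hx
    have hP : ({x,11} : Finset ℕ) ∈ Kpoints := by fin_cases hx <;> decide
    have him := hmap _ hP
    rw [Finset.image_insert, Finset.image_singleton, class11] at him
    have hx6 : φ x ∈ ({1,2,3,4,5,6} : Finset ℕ) := class16 x (by fin_cases hx <;> decide)
    have key : ∀ y ∈ ({1,2,3,4,5,6} : Finset ℕ),
        ({y,11} : Finset ℕ) ∈ Kpoints → y ∈ ({5,6} : Finset ℕ) := by decide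
    exact key _ hx6 him
  have h56 : Finset.image φ {5,6} = ({5,6} : Finset ℕ) := by
    apply Finset.eq_of_subset_of_card_le
    · intro y hy
      obtain ⟨a, ha, rfl⟩ := Finset.mem_image.mp hy
      exact class56 a ha
    · rw [Finset.card_image_of_injective _ hinj]
  have class1234 : ∀ x ∈ ({1,2,3,4} : Finset ℕ), φ x ∈ ({1,2,3,4} : Finset ℕ) := by
    intro x hx
    have h6 : φ x ∈ ({1,2,3,4,5,6} : Finset ℕ) := class16 x (by fin_cases hx <;> decide)
    have hnot : φ x ∉ ({5,6} : Finset ℕ) := by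
      intro hc
      rw [← h56] at hc
      obtain ⟨a, ha, hax⟩ := Finset.mem_image.mp hc
      have := hinj hax
      subst this
      fin_cases hx <;> simp_all
    simp only [Finset.mem_insert, Finset.mem_singleton] at h6 hnot ⊢
    omega
  refine ⟨?_, h56, ?_, ?_⟩
  · apply Finset.eq_of_subset_of_card_le
    · intro y hy
      obtain ⟨a, ha, rfl⟩ := Finset.mem_image.mp hy
      exact class1234 a ha
    · rw [Finset.card_image_of_injective _ hinj]
  · apply Finset.eq_of_subset_of_card_le
    · intro y hy
      obtain ⟨a, ha, rfl⟩ := Finset.mem_image.mp hy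
      exact class78910 a ha
    · rw [Finset.card_image_of_injective _ hinj]
  · rw [Finset.image_singleton, class11]
end

section
/- An automorphism φ of the combinatorics K satisfies φ(5) = 5 and φ(6) = 6 if and only if φ is the identity or φ = (1 2)(3 4)(7 10)(8 9) (= σ², where σ = (1 3 2 4)(5 6)(7 9 10 8)). -/
open Finset

/-- The permutation `(1 2)(3 4)(7 10)(8 9)`. -/
def tauK : Equiv.Perm ℕ :=
  ([1,2] : List ℕ).formPerm * ([3,4] : List ℕ).formPerm *
    ([7,10] : List ℕ).formPerm * ([8,9] : List ℕ).formPerm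

/- Enumeration lemmas about `Kpoints`, all proved by `decide`. -/
lemma lemA : ∀ T ∈ Kpoints, T.card = 2 → 5 ∈ T → ∀ x ∈ T, x = 5 ∨ x = 6 ∨ x = 11 := by decide
lemma lemB : ∀ T ∈ Kpoints, T.card = 3 → 5 ∈ T → ∀ x ∈ T, x = 5 ∨ x = 8 ∨ x = 9 := by decide
lemma lemC : ∀ T ∈ Kpoints, T.card = 3 → 6 ∈ T → ∀ x ∈ T, x = 6 ∨ x = 7 ∨ x = 10 := by decide
lemma lemD : ∀ T ∈ Kpoints, T.card = 4 → 5 ∈ T → 7 ∈ T →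
    ∀ x ∈ T, x = 1 ∨ x = 3 ∨ x = 5 ∨ x = 7 := by decide
lemma lemE : ∀ T ∈ Kpoints, T.card = 4 → 5 ∈ T → 10 ∈ T →
    ∀ x ∈ T, x = 2 ∨ x = 4 ∨ x = 5 ∨ x = 10 := by decide
lemma lemF : ∀ T ∈ Kpoints, T.card = 3 → 7 ∈ T → 11 ∈ T →
    ∀ x ∈ T, x = 2 ∨ x = 7 ∨ x = 11 := by decide
lemma lemG : ∀ T ∈ Kpoints, T.card = 3 → 10 ∈ T → 11 ∈ T →
    ∀ x ∈ T, x = 1 ∨ x = 10 ∨ x = 11 := by decide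
lemma lemH : ∀ T ∈ Kpoints, T.card = 2 → 1 ∈ T → ∀ x ∈ T, x = 1 ∨ x = 2 ∨ x = 9 := by decide
lemma lemI : ∀ T ∈ Kpoints, T.card = 2 → 2 ∈ T → ∀ x ∈ T, x = 1 ∨ x = 2 ∨ x = 8 := by decide

lemma tauK_fix {n : ℕ} (hn : n ∉ Finset.Icc 1 11) : tauK n = n := by
  rw [Finset.mem_Icc, not_and_or] at hn
  have h1 : n ∉ ([1,2] : List ℕ) := by simp; omega
  have h2 : n ∉ ([3,4] : List ℕ) := by simp; omega
  have h3 : n ∉ ([7,10] : List ℕ) := by simp; omega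
  have h4 : n ∉ ([8,9] : List ℕ) := by simp; omega
  show (([1,2] : List ℕ).formPerm * ([3,4] : List ℕ).formPerm *
    ([7,10] : List ℕ).formPerm * ([8,9] : List ℕ).formPerm) n = n
  rw [Equiv.Perm.mul_apply, Equiv.Perm.mul_apply, Equiv.Perm.mul_apply,
    List.formPerm_apply_of_notMem h4, List.formPerm_apply_of_notMem h3,
    List.formPerm_apply_of_notMem h2, List.formPerm_apply_of_notMem h1]

lemma sigmaK_fix {n : ℕ} (hn : n ∉ Finset.Icc 1 11) : sigmaK n = n := by
  rw [Finset.mem_Icc, not_and_or] at hn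
  have h1 : n ∉ ([1,3,2,4] : List ℕ) := by simp; omega
  have h2 : n ∉ ([5,6] : List ℕ) := by simp; omega
  have h3 : n ∉ ([7,9,10,8] : List ℕ) := by simp; omega
  show (([1,3,2,4] : List ℕ).formPerm * ([5,6] : List ℕ).formPerm *
    ([7,9,10,8] : List ℕ).formPerm) n = n
  rw [Equiv.Perm.mul_apply, Equiv.Perm.mul_apply,
    List.formPerm_apply_of_notMem h3, List.formPerm_apply_of_notMem h2,
    List.formPerm_apply_of_notMem h1]

/-- An automorphism `φ` of `K` satisfies `φ 5 = 5` and `φ 6 = 6` iff `φ` is the identity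
or `φ = (1 2)(3 4)(7 10)(8 9)`, the latter being `σ²`. -/
theorem stmt4 :
    (∀ φ : Equiv.Perm ℕ, IsAutoK φ →
      ((φ 5 = 5 ∧ φ 6 = 6) ↔ (φ = 1 ∨ φ = tauK))) ∧
    tauK = sigmaK ^ 2 := by
  constructor
  · intro φ hA
    constructor
    · rintro ⟨h5, h6⟩
      have ne : ∀ {a b v : ℕ}, φ a = v → φ b = v → a = b :=
        fun h1 h2 => φ.injective (h1.trans h2.symm)
      -- step for {5,11} : φ 11 = 11
      have hm1 : Finset.image φ ({5,11} : Finset ℕ) ∈ Kpoints := hA.2 _ (by decide)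
      have hc1 : (Finset.image φ ({5,11} : Finset ℕ)).card = 2 := by
        rw [Finset.card_image_of_injective _ φ.injective]; rfl
      have hi1 : (5:ℕ) ∈ Finset.image φ ({5,11} : Finset ℕ) := by
        have h' := Finset.mem_image_of_mem φ (by decide : (5:ℕ) ∈ ({5,11} : Finset ℕ))
        rwa [h5] at h'
      have h11 : φ 11 = 11 := by
        rcases lemA _ hm1 hc1 hi1 _ (Finset.mem_image_of_mem φ (by decide : (11:ℕ) ∈ ({5,11} : Finset ℕ))) with h|h|h
        · exact absurd (ne h h5) (by omega)
        · exact absurd (ne h h6) (by omega)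
        · exact h
      -- step for {5,8,9} : φ 8, φ 9 ∈ {8,9}
      have hm2 : Finset.image φ ({5,8,9} : Finset ℕ) ∈ Kpoints := hA.2 _ (by decide)
      have hc2 : (Finset.image φ ({5,8,9} : Finset ℕ)).card = 3 := by
        rw [Finset.card_image_of_injective _ φ.injective]; rfl
      have hi2 : (5:ℕ) ∈ Finset.image φ ({5,8,9} : Finset ℕ) := by
        have h' := Finset.mem_image_of_mem φ (by decide : (5:ℕ) ∈ ({5,8,9} : Finset ℕ))
        rwa [h5] at h'
      have h8' : φ 8 = 8 ∨ φ 8 = 9 := by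
        rcases lemB _ hm2 hc2 hi2 _ (Finset.mem_image_of_mem φ (by decide : (8:ℕ) ∈ ({5,8,9} : Finset ℕ))) with h|h|h
        · exact absurd (ne h h5) (by omega)
        · exact Or.inl h
        · exact Or.inr h
      have h9' : φ 9 = 8 ∨ φ 9 = 9 := by
        rcases lemB _ hm2 hc2 hi2 _ (Finset.mem_image_of_mem φ (by decide : (9:ℕ) ∈ ({5,8,9} : Finset ℕ))) with h|h|h
        · exact absurd (ne h h5) (by omega)
        · exact Or.inl h
        · exact Or.inr h
      -- step for {6,7,10} : φ 7, φ 10 ∈ {7,10}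
      have hm3 : Finset.image φ ({6,7,10} : Finset ℕ) ∈ Kpoints := hA.2 _ (by decide)
      have hc3 : (Finset.image φ ({6,7,10} : Finset ℕ)).card = 3 := by
        rw [Finset.card_image_of_injective _ φ.injective]; rfl
      have hi3 : (6:ℕ) ∈ Finset.image φ ({6,7,10} : Finset ℕ) := by
        have h' := Finset.mem_image_of_mem φ (by decide : (6:ℕ) ∈ ({6,7,10} : Finset ℕ))
        rwa [h6] at h'
      have h7' : φ 7 = 7 ∨ φ 7 = 10 := by
        rcases lemC _ hm3 hc3 hi3 _ (Finset.mem_image_of_mem φ (by decide : (7:ℕ) ∈ ({6,7,10} : Finset ℕ))) with h|h|h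
        · exact absurd (ne h h6) (by omega)
        · exact Or.inl h
        · exact Or.inr h
      have h10' : φ 10 = 7 ∨ φ 10 = 10 := by
        rcases lemC _ hm3 hc3 hi3 _ (Finset.mem_image_of_mem φ (by decide : (10:ℕ) ∈ ({6,7,10} : Finset ℕ))) with h|h|h
        · exact absurd (ne h h6) (by omega)
        · exact Or.inl h
        · exact Or.inr h
      -- common membership data for the quadruple points and {1,10,11}, {2,7,11}, {1,9}
      have hm4 : Finset.image φ ({1,3,5,7} : Finset ℕ) ∈ Kpoints := hA.2 _ (by decide)
      have hc4 : (Finset.image φ ({1,3,5,7} : Finset ℕ)).card = 4 := by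
        rw [Finset.card_image_of_injective _ φ.injective]; rfl
      have hi4 : (5:ℕ) ∈ Finset.image φ ({1,3,5,7} : Finset ℕ) := by
        have h' := Finset.mem_image_of_mem φ (by decide : (5:ℕ) ∈ ({1,3,5,7} : Finset ℕ))
        rwa [h5] at h'
      have hm5 : Finset.image φ ({2,4,5,10} : Finset ℕ) ∈ Kpoints := hA.2 _ (by decide)
      have hc5 : (Finset.image φ ({2,4,5,10} : Finset ℕ)).card = 4 := by
        rw [Finset.card_image_of_injective _ φ.injective]; rfl
      have hi5 : (5:ℕ) ∈ Finset.image φ ({2,4,5,10} : Finset ℕ) := by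
        have h' := Finset.mem_image_of_mem φ (by decide : (5:ℕ) ∈ ({2,4,5,10} : Finset ℕ))
        rwa [h5] at h'
      have hm6 : Finset.image φ ({1,10,11} : Finset ℕ) ∈ Kpoints := hA.2 _ (by decide)
      have hc6 : (Finset.image φ ({1,10,11} : Finset ℕ)).card = 3 := by
        rw [Finset.card_image_of_injective _ φ.injective]; rfl
      have hi6 : (11:ℕ) ∈ Finset.image φ ({1,10,11} : Finset ℕ) := by
        have h' := Finset.mem_image_of_mem φ (by decide : (11:ℕ) ∈ ({1,10,11} : Finset ℕ))
        rwa [h11] at h'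
      have hm7 : Finset.image φ ({2,7,11} : Finset ℕ) ∈ Kpoints := hA.2 _ (by decide)
      have hc7 : (Finset.image φ ({2,7,11} : Finset ℕ)).card = 3 := by
        rw [Finset.card_image_of_injective _ φ.injective]; rfl
      have hi7 : (11:ℕ) ∈ Finset.image φ ({2,7,11} : Finset ℕ) := by
        have h' := Finset.mem_image_of_mem φ (by decide : (11:ℕ) ∈ ({2,7,11} : Finset ℕ))
        rwa [h11] at h'
      have hm8 : Finset.image φ ({1,9} : Finset ℕ) ∈ Kpoints := hA.2 _ (by decide)
      have hc8 : (Finset.image φ ({1,9} : Finset ℕ)).card = 2 := by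
        rw [Finset.card_image_of_injective _ φ.injective]; rfl
      rcases h7' with h7 | h7
      · -- case φ 7 = 7 : identity
        have h10 : φ 10 = 10 := by
          rcases h10' with h|h
          · exact absurd (ne h h7) (by omega)
          · exact h
        have hj6 : (10:ℕ) ∈ Finset.image φ ({1,10,11} : Finset ℕ) := by
          have h' := Finset.mem_image_of_mem φ (by decide : (10:ℕ) ∈ ({1,10,11} : Finset ℕ))
          rwa [h10] at h'
        have h1 : φ 1 = 1 := by
          rcases lemG _ hm6 hc6 hj6 hi6 _ (Finset.mem_image_of_mem φ (by decide : (1:ℕ) ∈ ({1,10,11} : Finset ℕ))) with h|h|h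
          · exact h
          · exact absurd (ne h h10) (by omega)
          · exact absurd (ne h h11) (by omega)
        have hj4 : (7:ℕ) ∈ Finset.image φ ({1,3,5,7} : Finset ℕ) := by
          have h' := Finset.mem_image_of_mem φ (by decide : (7:ℕ) ∈ ({1,3,5,7} : Finset ℕ))
          rwa [h7] at h'
        have h3 : φ 3 = 3 := by
          rcases lemD _ hm4 hc4 hi4 hj4 _ (Finset.mem_image_of_mem φ (by decide : (3:ℕ) ∈ ({1,3,5,7} : Finset ℕ))) with h|h|h|h
          · exact absurd (ne h h1) (by omega)
          · exact h
          · exact absurd (ne h h5) (by omega)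
          · exact absurd (ne h h7) (by omega)
        have hj7 : (7:ℕ) ∈ Finset.image φ ({2,7,11} : Finset ℕ) := by
          have h' := Finset.mem_image_of_mem φ (by decide : (7:ℕ) ∈ ({2,7,11} : Finset ℕ))
          rwa [h7] at h'
        have h2 : φ 2 = 2 := by
          rcases lemF _ hm7 hc7 hj7 hi7 _ (Finset.mem_image_of_mem φ (by decide : (2:ℕ) ∈ ({2,7,11} : Finset ℕ))) with h|h|h
          · exact h
          · exact absurd (ne h h7) (by omega)
          · exact absurd (ne h h11) (by omega)
        have hj5 : (10:ℕ) ∈ Finset.image φ ({2,4,5,10} : Finset ℕ) := by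
          have h' := Finset.mem_image_of_mem φ (by decide : (10:ℕ) ∈ ({2,4,5,10} : Finset ℕ))
          rwa [h10] at h'
        have h4 : φ 4 = 4 := by
          rcases lemE _ hm5 hc5 hi5 hj5 _ (Finset.mem_image_of_mem φ (by decide : (4:ℕ) ∈ ({2,4,5,10} : Finset ℕ))) with h|h|h|h
          · exact absurd (ne h h2) (by omega)
          · exact h
          · exact absurd (ne h h5) (by omega)
          · exact absurd (ne h h10) (by omega)
        have hj8 : (1:ℕ) ∈ Finset.image φ ({1,9} : Finset ℕ) := by
          have h' := Finset.mem_image_of_mem φ (by decide : (1:ℕ) ∈ ({1,9} : Finset ℕ))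
          rwa [h1] at h'
        have h9 : φ 9 = 9 := by
          rcases lemH _ hm8 hc8 hj8 _ (Finset.mem_image_of_mem φ (by decide : (9:ℕ) ∈ ({1,9} : Finset ℕ))) with h|h|h
          · exact absurd (ne h h1) (by omega)
          · exact absurd (ne h h2) (by omega)
          · exact h
        have h8 : φ 8 = 8 := by
          rcases h8' with h|h
          · exact h
          · exact absurd (ne h h9) (by omega)
        left
        ext n
        by_cases hn : n ∈ Finset.Icc 1 11
        · rw [Finset.mem_Icc] at hn
          obtain ⟨hl, hr⟩ := hn
          simp only [Equiv.Perm.one_apply]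
          interval_cases n <;> assumption
        · rw [hA.1 n hn]; rfl
      · -- case φ 7 = 10 : tauK
        have h10 : φ 10 = 7 := by
          rcases h10' with h|h
          · exact h
          · exact absurd (ne h h7) (by omega)
        have hj7 : (10:ℕ) ∈ Finset.image φ ({2,7,11} : Finset ℕ) := by
          have h' := Finset.mem_image_of_mem φ (by decide : (7:ℕ) ∈ ({2,7,11} : Finset ℕ))
          rwa [h7] at h'
        have h2 : φ 2 = 1 := by
          rcases lemG _ hm7 hc7 hj7 hi7 _ (Finset.mem_image_of_mem φ (by decide : (2:ℕ) ∈ ({2,7,11} : Finset ℕ))) with h|h|h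
          · exact h
          · exact absurd (ne h h7) (by omega)
          · exact absurd (ne h h11) (by omega)
        have hj6 : (7:ℕ) ∈ Finset.image φ ({1,10,11} : Finset ℕ) := by
          have h' := Finset.mem_image_of_mem φ (by decide : (10:ℕ) ∈ ({1,10,11} : Finset ℕ))
          rwa [h10] at h'
        have h1 : φ 1 = 2 := by
          rcases lemF _ hm6 hc6 hj6 hi6 _ (Finset.mem_image_of_mem φ (by decide : (1:ℕ) ∈ ({1,10,11} : Finset ℕ))) with h|h|h
          · exact h
          · exact absurd (ne h h10) (by omega)
          · exact absurd (ne h h11) (by omega)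
        have hj5 : (7:ℕ) ∈ Finset.image φ ({2,4,5,10} : Finset ℕ) := by
          have h' := Finset.mem_image_of_mem φ (by decide : (10:ℕ) ∈ ({2,4,5,10} : Finset ℕ))
          rwa [h10] at h'
        have h4 : φ 4 = 3 := by
          rcases lemD _ hm5 hc5 hi5 hj5 _ (Finset.mem_image_of_mem φ (by decide : (4:ℕ) ∈ ({2,4,5,10} : Finset ℕ))) with h|h|h|h
          · exact absurd (ne h h2) (by omega)
          · exact h
          · exact absurd (ne h h5) (by omega)
          · exact absurd (ne h h10) (by omega)
        have hj4 : (10:ℕ) ∈ Finset.image φ ({1,3,5,7} : Finset ℕ) := by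
          have h' := Finset.mem_image_of_mem φ (by decide : (7:ℕ) ∈ ({1,3,5,7} : Finset ℕ))
          rwa [h7] at h'
        have h3 : φ 3 = 4 := by
          rcases lemE _ hm4 hc4 hi4 hj4 _ (Finset.mem_image_of_mem φ (by decide : (3:ℕ) ∈ ({1,3,5,7} : Finset ℕ))) with h|h|h|h
          · exact absurd (ne h h1) (by omega)
          · exact h
          · exact absurd (ne h h5) (by omega)
          · exact absurd (ne h h7) (by omega)
        have hj8 : (2:ℕ) ∈ Finset.image φ ({1,9} : Finset ℕ) := by
          have h' := Finset.mem_image_of_mem φ (by decide : (1:ℕ) ∈ ({1,9} : Finset ℕ))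
          rwa [h1] at h'
        have h9 : φ 9 = 8 := by
          rcases lemI _ hm8 hc8 hj8 _ (Finset.mem_image_of_mem φ (by decide : (9:ℕ) ∈ ({1,9} : Finset ℕ))) with h|h|h
          · exact absurd (ne h h2) (by omega)
          · exact absurd (ne h h1) (by omega)
          · rcases h9' with h'|h'
            · exact h'
            · exact absurd (h'.symm.trans h) (by omega)
        have h8 : φ 8 = 9 := by
          rcases h8' with h|h
          · exact absurd (ne h h9) (by omega)
          · exact h
        right
        ext n
        by_cases hn : n ∈ Finset.Icc 1 11
        · rw [Finset.mem_Icc] at hn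
          obtain ⟨hl, hr⟩ := hn
          interval_cases n
          · rw [h1]; decide
          · rw [h2]; decide
          · rw [h3]; decide
          · rw [h4]; decide
          · rw [h5]; decide
          · rw [h6]; decide
          · rw [h7]; decide
          · rw [h8]; decide
          · rw [h9]; decide
          · rw [h10]; decide
          · rw [h11]; decide
        · rw [hA.1 n hn, tauK_fix hn]
    · rintro (rfl | rfl)
      · exact ⟨rfl, rfl⟩
      · exact ⟨by decide, by decide⟩
  · ext n
    by_cases hn : n ∈ Finset.Icc 1 11
    · rw [Finset.mem_Icc] at hn
      obtain ⟨hl, hr⟩ := hn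
      interval_cases n <;> decide
    · rw [tauK_fix hn, pow_two, Equiv.Perm.mul_apply, sigmaK_fix hn, sigmaK_fix hn]
end

section
/- Let α ∈ ℂ satisfy α⁴ − α³ + α² − α + 1 = 0 and set β = −α². Then β⁴ − β³ + β² − β + 1 = 0, and the projective transformation of ℂP² induced by the invertible linear map T : ℂ³ → ℂ³, T(x,y,z) = (z, x+y−z, y), maps the line Lᵢ(α) of the arrangement A(α) onto the line L_{σ(i)}(β) of the arrangement A(β) for every i ∈ {1,…,11}, where σ = (1 3 2 4)(5 6)(7 9 10 8). -/
open Finset Projectivization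
open scoped LinearAlgebra.Projectivization

/-- The complex projective plane `ℂP²`, as the projectivization of `ℂ³`. -/
abbrev CP2 := ℙ ℂ (Fin 3 → ℂ)

/-- The quotient topology on `ℂP²` coming from `ℂ³ \ {0}`. -/
noncomputable instance : TopologicalSpace CP2 :=
  inferInstanceAs (TopologicalSpace (Quotient _))

/-- The projective line `{c₀ x + c₁ y + c₂ z = 0}` with coefficient vector `c`. -/
noncomputable def lineOf (c : Fin 3 → ℂ) : Set CP2 :=
  {p | c 0 * p.rep 0 + c 1 * p.rep 1 + c 2 * p.rep 2 = 0}

/-- Coefficient vectors of the eleven linear forms defining the arrangement `A(α)`: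
`L₁: z`, `L₂: x+y−z`, `L₃: x`, `L₄: y`, `L₅: x−z`, `L₆: y−z`, `L₇: −α³x+z`, `L₈: y−αz`,
`L₉: (α−1)x−y+z`, `L₁₀: −α(α−1)x+y+α(α−1)z`, `L₁₁: −α(α−1)x+y−αz`. -/
def coeff (α : ℂ) : ℕ → (Fin 3 → ℂ)
  | 1 => ![0, 0, 1]
  | 2 => ![1, 1, -1]
  | 3 => ![1, 0, 0]
  | 4 => ![0, 1, 0]
  | 5 => ![1, 0, -1]
  | 6 => ![0, 1, -1]
  | 7 => ![-α ^ 3, 0, 1]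
  | 8 => ![0, 1, -α]
  | 9 => ![α - 1, -1, 1]
  | 10 => ![-α * (α - 1), 1, α * (α - 1)]
  | 11 => ![-α * (α - 1), 1, -α]
  | _ => 0

/-- The `i`-th line of the arrangement `A(α)`, for `i ∈ {1,…,11}`. -/
noncomputable def Aline (α : ℂ) (i : ℕ) : Set CP2 := lineOf (coeff α i)

/-- A family `lines` indexed by `{1,…,n}` is a realization of the combinatorics with point set
`P ⊆ Finset ℕ` if the lines are pairwise distinct and, for each pair of distinct indices
`i, j`, the set of indices `k` with `lines i ∩ lines j ⊆ lines k` is exactly the (unique)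
member of `P` containing both `i` and `j`. -/
def IsRealization (P : Finset (Finset ℕ)) (n : ℕ) (lines : ℕ → Set CP2) : Prop :=
  (∀ i ∈ Finset.Icc 1 n, ∀ j ∈ Finset.Icc 1 n, i ≠ j → lines i ≠ lines j) ∧
  ∀ i ∈ Finset.Icc 1 n, ∀ j ∈ Finset.Icc 1 n, i ≠ j → ∀ S ∈ P, i ∈ S → j ∈ S →
    {k : ℕ | k ∈ Finset.Icc 1 n ∧ lines i ∩ lines j ⊆ lines k} = ↑S

/-- The linear map `T : ℂ³ → ℂ³`, `(x, y, z) ↦ (z, x + y − z, y)`. -/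
noncomputable def Tlin : (Fin 3 → ℂ) →ₗ[ℂ] (Fin 3 → ℂ) :=
  Matrix.toLin' !![0, 0, 1; 1, 1, -1; 0, 1, 0]

/-!
A line `{c ⬝ᵥ v = 0}` is carried by the projectivization of an invertible matrix `M` onto the
line `{c' ⬝ᵥ v = 0}` as soon as `c' ᵥ* M` is a nonzero multiple of `c`. The theorem thus reduces
to eleven vector identities `c_{σ i}(−α²) ᵥ* T = tᵢ • cᵢ(α)`, each of which holds modulo
`Φ₁₀(α)`; that `−α²` is again a root comes from `Φ₁₀(−x²) = Φ₅(x²) = Φ₅(x) Φ₁₀(x)`.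
-/

namespace Projectivization

variable {K V W : Type*} [DivisionRing K] [AddCommGroup V] [Module K V]
  [AddCommGroup W] [Module K W]

theorem apply_rep_mk_eq_zero_iff (φ : Module.Dual K V) {v : V} (hv : v ≠ 0) :
    φ (mk K v hv).rep = 0 ↔ φ v = 0 := by
  obtain ⟨a, ha⟩ := exists_smul_eq_mk_rep K v hv
  rw [← ha, Units.smul_def, map_smul, smul_eq_mul, mul_eq_zero, or_iff_right a.ne_zero]

theorem image_map_setOf_apply_rep_eq_zero (f : V →ₗ[K] W) (hf : Function.Injective f)
    (hf' : Function.Surjective f) (φ : Module.Dual K V) (ψ : Module.Dual K W)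
    (h : ∀ v, ψ (f v) = 0 ↔ φ v = 0) :
    map f hf '' {p | φ p.rep = 0} = {q | ψ q.rep = 0} := by
  ext q
  induction q using ind with | h w hw => ?_
  obtain ⟨v, rfl⟩ := hf' w
  have hv : v ≠ 0 := by rintro rfl; exact hw (map_zero f)
  rw [← map_mk f hf v hv, (map_injective f hf).mem_set_image, Set.mem_ofPred_eq,
    Set.mem_ofPred_eq, map_mk, apply_rep_mk_eq_zero_iff, apply_rep_mk_eq_zero_iff, h]

end Projectivization

open Matrix

theorem lineOf_eq_setOf_dotProduct (c : Fin 3 → ℂ) : lineOf c = {p | c ⬝ᵥ p.rep = 0} := by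
  simp [lineOf, dotProduct, Fin.sum_univ_three]

theorem image_map_toLin'_lineOf {M : Matrix (Fin 3) (Fin 3) ℂ}
    (hM : Function.Injective (toLin' M)) {c c' : Fin 3 → ℂ} {t : ℂ} (ht : t ≠ 0)
    (h : c' ᵥ* M = t • c) :
    Projectivization.map (toLin' M) hM '' lineOf c = lineOf c' := by
  simp only [lineOf_eq_setOf_dotProduct]
  refine Projectivization.image_map_setOf_apply_rep_eq_zero _ hM
    (LinearMap.surjective_of_injective hM) (dotProductEquiv ℂ _ c) (dotProductEquiv ℂ _ c') ?_
  intro v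
  simp [toLin'_apply, dotProduct_mulVec, h, ht]

def Tmat : Matrix (Fin 3) (Fin 3) ℂ := !![0, 0, 1; 1, 1, -1; 0, 1, 0]

theorem Tlin_eq_toLin' : Tlin = toLin' Tmat := rfl

theorem Tlin_injective : Function.Injective Tlin := by
  rw [Tlin_eq_toLin', toLin'_apply', coe_mulVecLin, mulVec_injective_iff_isUnit,
    isUnit_iff_isUnit_det]
  simp [Tmat, det_fin_three]

theorem cyclotomic10_neg_sq {R : Type*} [CommRing R] (x : R) :
    (-x ^ 2) ^ 4 - (-x ^ 2) ^ 3 + (-x ^ 2) ^ 2 - (-x ^ 2) + 1 =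
      (x ^ 4 + x ^ 3 + x ^ 2 + x + 1) * (x ^ 4 - x ^ 3 + x ^ 2 - x + 1) := by
  ring

theorem ne_zero_of_cyclotomic10 {x : ℂ} (hx : x ^ 4 - x ^ 3 + x ^ 2 - x + 1 = 0) : x ≠ 0 := by
  rintro rfl
  norm_num at hx

theorem sq_add_one_ne_zero_of_cyclotomic10 {x : ℂ} (hx : x ^ 4 - x ^ 3 + x ^ 2 - x + 1 = 0) :
    x ^ 2 + 1 ≠ 0 := by
  intro h
  exact one_ne_zero (by linear_combination hx - (x ^ 2 - x) * h : (1 : ℂ) = 0)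

def lineScale (α : ℂ) : ℕ → ℂ
  | 6 => -1
  | 7 => -α ^ 2
  | 9 => -α * (α ^ 2 + 1)
  | 10 | 11 => α ^ 2 + 1
  | _ => 1

theorem lineScale_ne_zero {α : ℂ} (hα : α ^ 4 - α ^ 3 + α ^ 2 - α + 1 = 0) (i : ℕ) :
    lineScale α i ≠ 0 := by
  have h0 := ne_zero_of_cyclotomic10 hα
  have h1 := sq_add_one_ne_zero_of_cyclotomic10 hα
  unfold lineScale
  split <;> simp [h0, h1]

theorem vec3_vecMul_Tmat (a b c : ℂ) : ![a, b, c] ᵥ* Tmat = ![b, b + c, a - b] := by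
  ext k
  fin_cases k <;> simp [Tmat, vecMul, dotProduct, Fin.sum_univ_three, sub_eq_add_neg]

theorem coeff_sigmaK_vecMul_Tmat {α : ℂ} (hα : α ^ 4 - α ^ 3 + α ^ 2 - α + 1 = 0)
    {i : ℕ} (hi : i ∈ Finset.Icc 1 11) :
    coeff (-α ^ 2) (sigmaK i) ᵥ* Tmat = lineScale α i • coeff α i := by
  obtain ⟨hi1, hi2⟩ := Finset.mem_Icc.mp hi
  interval_cases i <;>
    simp only [sigmaK, List.formPerm_cons_cons, List.formPerm_singleton, mul_one,
      Equiv.Perm.coe_mul, Function.comp_apply, Equiv.swap_apply_def, ↓reduceIte,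
      Nat.reduceEqDiff, coeff, lineScale, vec3_vecMul_Tmat, smul_vec3, smul_eq_mul] <;>
    exact vec3_eq (by grind) (by grind) (by grind)

/-- If `α` is a root of `Φ₁₀` and `β = −α²`, then `β` is also a root of `Φ₁₀`, the linear map
`T(x,y,z) = (z, x+y−z, y)` is invertible, and the induced projective transformation of `ℂP²`
maps the line `Lᵢ(α)` of `A(α)` onto the line `L_{σ(i)}(β)` of `A(β)` for all `i ∈ {1,…,11}`. -/
theorem stmt8 (α : ℂ) (hα : α ^ 4 - α ^ 3 + α ^ 2 - α + 1 = 0) (β : ℂ) (hβ : β = -α ^ 2) :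
    β ^ 4 - β ^ 3 + β ^ 2 - β + 1 = 0 ∧
    ∃ hT : Function.Injective Tlin,
      ∀ i ∈ Finset.Icc 1 11,
        Projectivization.map Tlin hT '' Aline α i = Aline β (sigmaK i) := by
  subst hβ
  refine ⟨by rw [cyclotomic10_neg_sq, hα, mul_zero], Tlin_injective, fun i hi => ?_⟩
  exact image_map_toLin'_lineOf Tlin_injective (lineScale_ne_zero hα i)
    (coeff_sigmaK_vecMul_Tmat hα hi)
end

section
/- The automorphism group of the combinatorics 𝔎 is trivial: the only permutation φ of {1,…,12} such that φ(S) ∈ 𝔓 for every S ∈ 𝔓 is the identity. -/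
open Finset

/-- The point set `𝔓` of the combinatorics `𝔎` on the line set `{1,…,12}`. -/
def K12points : Finset (Finset ℕ) :=
  { {1,2}, {1,3,5,7,12}, {1,4,6,8}, {1,9}, {1,10,11}, {2,3,6,9}, {2,4,5,10},
    {2,7,11}, {2,8}, {2,12}, {3,4}, {3,8,11}, {3,10}, {4,7}, {4,9,11}, {4,12},
    {5,6}, {5,8,9}, {5,11}, {6,7,10}, {6,11}, {6,12}, {7,8}, {7,9}, {8,10},
    {8,12}, {9,10}, {9,12}, {10,12}, {11,12} }

/-- An automorphism of `𝔎`: a permutation of `{1,…,12}` (viewed as a permutation of `ℕ`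
fixing everything outside `{1,…,12}`) sending every member of `𝔓` to a member of `𝔓`. -/
def IsAutoK12 (φ : Equiv.Perm ℕ) : Prop :=
  (∀ n : ℕ, n ∉ Finset.Icc 1 12 → φ n = n) ∧
  ∀ S ∈ K12points, S.image φ ∈ K12points

theorem K12key (φ : Equiv.Perm ℕ) (hφ : IsAutoK12 φ) (n k : ℕ) :
    (K12points.filter (fun S => φ n ∈ S ∧ S.card = k)).card
      = (K12points.filter (fun S => n ∈ S ∧ S.card = k)).card := by
  have hinj : Function.Injective φ := φ.injective
  have hP : Finset.image (fun S => S.image φ) K12points = K12points := by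
    apply Finset.eq_of_subset_of_card_le
    · intro T hT
      rcases Finset.mem_image.mp hT with ⟨S, hS, rfl⟩
      exact hφ.2 S hS
    · rw [Finset.card_image_of_injective _ (Finset.image_injective hinj)]
  symm
  apply Finset.card_bij (fun S _ => S.image φ)
  · intro S hS
    rcases Finset.mem_filter.mp hS with ⟨hS1, hn, hc⟩
    refine Finset.mem_filter.mpr ⟨hφ.2 S hS1, Finset.mem_image_of_mem _ hn, ?_⟩
    rw [Finset.card_image_of_injective _ hinj, hc]
  · intro S1 h1 S2 h2 h
    exact Finset.image_injective hinj h
  · intro T hT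
    rcases Finset.mem_filter.mp hT with ⟨hT1, hn, hc⟩
    rw [← hP] at hT1
    rcases Finset.mem_image.mp hT1 with ⟨S, hS, rfl⟩
    refine ⟨S, Finset.mem_filter.mpr ⟨hS, ?_, ?_⟩, rfl⟩
    · rcases Finset.mem_image.mp hn with ⟨a, ha, hae⟩
      rwa [hinj hae] at ha
    · rwa [Finset.card_image_of_injective _ hinj] at hc

/-- The automorphism group of the combinatorics `𝔎` is trivial: the only automorphism of
`𝔎` is the identity. -/
theorem stmt10 (φ : Equiv.Perm ℕ) (hφ : IsAutoK12 φ) : φ = 1 := by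
  have hinj : Function.Injective φ := φ.injective
  have hIcc : ∀ i ∈ Finset.Icc 1 12, φ i ∈ Finset.Icc (1:ℕ) 12 := by
    intro i hi
    by_contra hc
    have := hφ.1 (φ i) hc
    have := hinj this
    rw [this] at hc
    exact hc hi
  have h12 : φ 12 = 12 := by
    have h2 := K12key φ hφ 12 2
    have hm := hIcc 12 (by decide)
    generalize hv : φ 12 = m at h2 hm ⊢
    fin_cases hm <;> revert h2 <;> decide
  have h11 : φ 11 = 11 := by
    have h2 := K12key φ hφ 11 2
    have h3 := K12key φ hφ 11 3
    have hm := hIcc 11 (by decide)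
    generalize hv : φ 11 = m at h2 h3 hm ⊢
    fin_cases hm <;> revert h2 h3 <;> decide
  have h7 : φ 7 = 7 := by
    have h2 := K12key φ hφ 7 2
    have h3 := K12key φ hφ 7 3
    have hm := hIcc 7 (by decide)
    generalize hv : φ 7 = m at h2 h3 hm ⊢
    fin_cases hm <;> revert h2 h3 <;> decide
  have h4 : φ 4 = 4 := by
    have h2 := K12key φ hφ 4 2
    have hp := hφ.2 {4,7} (by decide)
    rw [show ({4,7}:Finset ℕ).image φ = {φ 4, φ 7} from by simp, h7] at hp
    have hm := hIcc 4 (by decide)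
    generalize hv : φ 4 = m at h2 hp hm ⊢
    fin_cases hm <;> revert h2 hp <;> decide
  have h2v : φ 2 = 2 := by
    have h2 := K12key φ hφ 2 2
    have hp := hφ.2 {2,7,11} (by decide)
    rw [show ({2,7,11}:Finset ℕ).image φ = {φ 2, φ 7, φ 11} from by simp, h7, h11] at hp
    have hm := hIcc 2 (by decide)
    generalize hv : φ 2 = m at h2 hp hm ⊢
    fin_cases hm <;> revert h2 hp <;> decide
  have h6 : φ 6 = 6 := by
    have h2 := K12key φ hφ 6 2
    have hp := hφ.2 {6,11} (by decide)
    rw [show ({6,11}:Finset ℕ).image φ = {φ 6, φ 11} from by simp, h11] at hp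
    have hm := hIcc 6 (by decide)
    generalize hv : φ 6 = m at h2 hp hm ⊢
    fin_cases hm <;> revert h2 hp <;> decide
  have h5 : φ 5 = 5 := by
    have h2 := K12key φ hφ 5 2
    have hp := hφ.2 {5,11} (by decide)
    rw [show ({5,11}:Finset ℕ).image φ = {φ 5, φ 11} from by simp, h11] at hp
    have hm := hIcc 5 (by decide)
    generalize hv : φ 5 = m at h2 hp hm ⊢
    fin_cases hm <;> revert h2 hp <;> decide
  have h3v : φ 3 = 3 := by
    have h2 := K12key φ hφ 3 2
    have hp := hφ.2 {3,4} (by decide)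
    rw [show ({3,4}:Finset ℕ).image φ = {φ 3, φ 4} from by simp, h4] at hp
    have hm := hIcc 3 (by decide)
    generalize hv : φ 3 = m at h2 hp hm ⊢
    fin_cases hm <;> revert h2 hp <;> decide
  have h1 : φ 1 = 1 := by
    have h2 := K12key φ hφ 1 2
    have hp := hφ.2 {1,2} (by decide)
    rw [show ({1,2}:Finset ℕ).image φ = {φ 1, φ 2} from by simp, h2v] at hp
    have hm := hIcc 1 (by decide)
    generalize hv : φ 1 = m at h2 hp hm ⊢
    fin_cases hm <;> revert h2 hp <;> decide
  have h8 : φ 8 = 8 := by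
    have h2 := K12key φ hφ 8 2
    have hp := hφ.2 {2,8} (by decide)
    rw [show ({2,8}:Finset ℕ).image φ = {φ 2, φ 8} from by simp, h2v] at hp
    have hq := hφ.2 {7,8} (by decide)
    rw [show ({7,8}:Finset ℕ).image φ = {φ 7, φ 8} from by simp, h7] at hq
    have hm := hIcc 8 (by decide)
    generalize hv : φ 8 = m at h2 hp hq hm ⊢
    fin_cases hm <;> revert h2 hp hq <;> decide
  have h9 : φ 9 = 9 := by
    have h2 := K12key φ hφ 9 2
    have hp := hφ.2 {1,9} (by decide)
    rw [show ({1,9}:Finset ℕ).image φ = {φ 1, φ 9} from by simp, h1] at hp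
    have hm := hIcc 9 (by decide)
    generalize hv : φ 9 = m at h2 hp hm ⊢
    fin_cases hm <;> revert h2 hp <;> decide
  have h10 : φ 10 = 10 := by
    have h2 := K12key φ hφ 10 2
    have hp := hφ.2 {3,10} (by decide)
    rw [show ({3,10}:Finset ℕ).image φ = {φ 3, φ 10} from by simp, h3v] at hp
    have hm := hIcc 10 (by decide)
    generalize hv : φ 10 = m at h2 hp hm ⊢
    fin_cases hm <;> revert h2 hp <;> decide
  ext n
  show φ n = n
  by_cases h : n ∈ Finset.Icc 1 12
  · rw [Finset.mem_Icc] at h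
    obtain ⟨hl, hr⟩ := h
    interval_cases n <;> assumption
  · exact hφ.1 n h
end

section
/- Every automorphism φ of the combinatorics 𝔎 satisfies φ(12) = 12 and maps the set {1,3,5,7,12} (the unique element of 𝔓 with five elements) onto itself. -/
open Finset

lemma card5_unique : ∀ S ∈ K12points, (S.card = 5 ↔ S = ({1, 3, 5, 7, 12} : Finset ℕ)) := by
  decide

lemma deg12 : (K12points.filter (fun S => 12 ∈ S)).card = 8 := by decide

lemma deg_unique : ∀ x ∈ ({1, 3, 5, 7, 12} : Finset ℕ),
    (K12points.filter (fun S => x ∈ S)).card = 8 → x = 12 := by decide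

/-- Every automorphism `φ` of `𝔎` satisfies `φ 12 = 12` and maps `{1,3,5,7,12}` — the
unique member of `𝔓` with five elements — onto itself. -/
theorem stmt11 (φ : Equiv.Perm ℕ) (hφ : IsAutoK12 φ) :
    φ 12 = 12 ∧ Finset.image φ {1, 3, 5, 7, 12} = ({1, 3, 5, 7, 12} : Finset ℕ) ∧
    ∀ S ∈ K12points, (S.card = 5 ↔ S = ({1, 3, 5, 7, 12} : Finset ℕ)) := by
  have hinj : Function.Injective (Finset.image φ) := Finset.image_injective φ.injective
  -- the five-element point maps to itself
  have hmem : ({1, 3, 5, 7, 12} : Finset ℕ) ∈ K12points := by decide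
  have himg : Finset.image φ {1, 3, 5, 7, 12} ∈ K12points := hφ.2 _ hmem
  have hcard : (Finset.image φ {1, 3, 5, 7, 12}).card = 5 := by
    rw [Finset.card_image_of_injective _ φ.injective]; decide
  have heq : Finset.image φ {1, 3, 5, 7, 12} = ({1, 3, 5, 7, 12} : Finset ℕ) :=
    (card5_unique _ himg).mp hcard
  -- the image map permutes K12points
  have hsub : K12points.image (Finset.image φ) ⊆ K12points := by
    intro T hT
    obtain ⟨S, hS, rfl⟩ := Finset.mem_image.mp hT
    exact hφ.2 _ hS
  have hsur : K12points.image (Finset.image φ) = K12points := by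
    apply Finset.eq_of_subset_of_card_le hsub
    rw [Finset.card_image_of_injective _ hinj]
  -- degree of φ 12 equals degree of 12
  have hdeg : (K12points.filter (fun S => φ 12 ∈ S)).card = 8 := by
    conv_lhs => rw [← hsur]
    rw [Finset.filter_image]
    rw [Finset.card_image_of_injective _ hinj]
    have h : ∀ S : Finset ℕ, (φ 12 ∈ S.image φ) ↔ (12 ∈ S) := by
      intro S
      constructor
      · intro h
        obtain ⟨a, ha, hae⟩ := Finset.mem_image.mp h
        rwa [← φ.injective hae]
      · exact fun h => Finset.mem_image_of_mem φ h
    simp only [Function.comp, h]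
    exact deg12
  -- φ 12 ∈ {1,3,5,7,12}
  have h12mem : φ 12 ∈ ({1, 3, 5, 7, 12} : Finset ℕ) := by
    rw [← heq]
    exact Finset.mem_image_of_mem φ (by decide)
  exact ⟨deg_unique _ h12mem hdeg, heq, card5_unique⟩
end

section
/- Let 𝔄 = {L₁,…,L₁₂} and 𝔄' = {L'₁,…,L'₁₂} be two twelve-line arrangements in ℂP² that are realizations of the combinatorics 𝔎, and let f : ℂP² → ℂP² be a homeomorphism mapping the union of the lines of 𝔄 onto the union of the lines of 𝔄'. Then f maps each line Lᵢ onto L'ᵢ; that is, since the automorphism group of 𝔎 is trivial, any homeomorphism of pairs between realizations of 𝔎 is automatically order-preserving. -/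
open Finset Projectivization
open scoped LinearAlgebra.Projectivization

/-- A subset of `ℂP²` is a projective line if it is cut out by a nonzero linear form. -/
def IsProjLine (s : Set CP2) : Prop :=
  ∃ c : Fin 3 → ℂ, c ≠ 0 ∧ s = lineOf c

/-!
Off its finitely many multiple points, an arrangement of lines is a disjoint union of closed
pieces, one in each line, while a projective line stays connected after removing finitely many
points (it is covered by two overlapping copies of `ℂ`). Hence a homeomorphism carrying one union
of lines onto the other carries every line into a line, and comparing with its inverse, it
permutes the lines: `f '' Lᵢ = L'_{σ i}`. Since `f` preserves incidences, `σ` is an automorphism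
of `𝔎`, and the sizes of the points on each line and on pairs of lines single out every line,
so `σ` is the identity.
-/

namespace Projectivization

theorem eq_cross_of_orthogonal {F : Type*} [Field F] [DecidableEq F] {v w p : ℙ F (Fin 3 → F)}
    (hvw : v ≠ w) (hv : v.orthogonal p) (hw : w.orthogonal p) : p = cross v w := by
  induction v with | h v hv' =>
  induction w with | h w hw' =>
  induction p with | h p _ =>
  rw [orthogonal_mk] at hv hw
  rw [cross_mk_of_ne hv' hw' hvw, mk_eq_mk_iff_crossProduct_eq_zero,
    cross_cross_eq_smul_sub_smul', dotProduct_comm p, hw, hv, zero_smul, zero_smul, sub_zero]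

end Projectivization

lemma LinearIndependent.pair_add_smul_ne_zero {R M : Type*} [Ring R] [Nontrivial R]
    [AddCommGroup M] [Module R M] {a b : M} (hab : LinearIndependent R ![a, b]) (t : R) :
    a + t • b ≠ 0 := fun h =>
  one_ne_zero (LinearIndependent.pair_iff.1 hab 1 t (by rwa [one_smul])).1

open Matrix Topology

section Lines

lemma mem_lineOf_iff {c : Fin 3 → ℂ} {p : CP2} : p ∈ lineOf c ↔ c ⬝ᵥ p.rep = 0 := by
  simp [lineOf, dotProduct, Fin.sum_univ_three]

lemma mk_mem_lineOf_iff {c v : Fin 3 → ℂ} (hv : v ≠ 0) :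
    mk ℂ v hv ∈ lineOf c ↔ c ⬝ᵥ v = 0 := by
  obtain ⟨a, ha⟩ := exists_smul_eq_mk_rep ℂ v hv
  rw [mem_lineOf_iff, ← ha, dotProduct_smul, Units.smul_def, smul_eq_zero,
    or_iff_right a.ne_zero]

lemma lineOf_eq_setOf_orthogonal {c : Fin 3 → ℂ} (hc : c ≠ 0) :
    lineOf c = {p | (mk ℂ c hc).orthogonal p} := by
  ext p
  induction p using Projectivization.ind with
  | h v hv => rw [mk_mem_lineOf_iff, Set.mem_ofPred_eq, orthogonal_mk]

lemma subsingleton_lineOf_inter {c c' : Fin 3 → ℂ} (hc : c ≠ 0) (hc' : c' ≠ 0)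
    (h : lineOf c ≠ lineOf c') : (lineOf c ∩ lineOf c').Subsingleton := by
  have hne : mk ℂ c hc ≠ mk ℂ c' hc' := fun h' => h <| by
    rw [lineOf_eq_setOf_orthogonal hc, lineOf_eq_setOf_orthogonal hc', h']
  rw [lineOf_eq_setOf_orthogonal hc, lineOf_eq_setOf_orthogonal hc']
  rintro p ⟨hp, hp'⟩ q ⟨hq, hq'⟩
  rw [eq_cross_of_orthogonal hne hp hp', eq_cross_of_orthogonal hne hq hq']

lemma isQuotientMap_mk' :
    IsQuotientMap (Projectivization.mk' ℂ : {v : Fin 3 → ℂ // v ≠ 0} → CP2) :=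
  isQuotientMap_quotient_mk'

lemma isClosed_lineOf (c : Fin 3 → ℂ) : IsClosed (lineOf c) := by
  rw [← isQuotientMap_mk'.isClosed_preimage]
  have : mk' ℂ ⁻¹' lineOf c = {v : {v : Fin 3 → ℂ // v ≠ 0} | c ⬝ᵥ v.1 = 0} :=
    Set.ext fun v => mk_mem_lineOf_iff v.2
  rw [this]
  exact isClosed_eq (by fun_prop) continuous_const

lemma exists_lineOf_eq_setOf_mem_span {c : Fin 3 → ℂ} (hc : c ≠ 0) : ∃ a b : Fin 3 → ℂ,
    LinearIndependent ℂ ![a, b] ∧ lineOf c = {p | p.rep ∈ Submodule.span ℂ {a, b}} := by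
  set K := LinearMap.ker (dotProductEquiv ℂ (Fin 3) c)
  have hK : Module.finrank ℂ K = 2 := by
    have := Module.Dual.finrank_ker_add_one_of_ne_zero
      ((dotProductEquiv ℂ (Fin 3)).map_ne_zero_iff.2 hc)
    rw [Module.finrank_fin_fun] at this
    exact Nat.add_right_cancel (this.trans rfl : _ = 2 + 1)
  set B := Module.finBasisOfFinrankEq ℂ K hK
  have hB : ![(B 0 : Fin 3 → ℂ), B 1] = K.subtype ∘ B := by
    ext i : 1
    fin_cases i <;> rfl
  refine ⟨B 0, B 1, hB ▸ B.linearIndependent.map' K.subtype K.ker_subtype, ?_⟩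
  ext p
  rw [mem_lineOf_iff, Set.mem_ofPred_eq]
  constructor
  · intro hp
    have := B.sum_repr ⟨p.rep, hp⟩
    rw [Fin.sum_univ_two] at this
    exact Submodule.mem_span_pair.2 ⟨_, _, congrArg Subtype.val this⟩
  · have hsub : Submodule.span ℂ {(B 0 : Fin 3 → ℂ), (B 1 : Fin 3 → ℂ)} ≤ K :=
      Submodule.span_le.2 (Set.insert_subset (B 0).2 (Set.singleton_subset_iff.2 (B 1).2))
    exact fun hp => hsub hp

section AffineChart

variable {a b : Fin 3 → ℂ}

noncomputable def affineChart (hab : LinearIndependent ℂ ![a, b]) (t : ℂ) : CP2 :=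
  mk ℂ (a + t • b) (hab.pair_add_smul_ne_zero t)

variable (hab : LinearIndependent ℂ ![a, b])

lemma continuous_affineChart : Continuous (affineChart hab) :=
  continuous_quotient_mk'.comp ((by fun_prop : Continuous fun t : ℂ => a + t • b).subtype_mk _)

lemma affineChart_injective : Function.Injective (affineChart hab) := by
  intro s t h
  obtain ⟨u, hu⟩ := (mk_eq_mk_iff' ℂ _ _ _ _).1 h
  obtain ⟨hu1, hts⟩ := LinearIndependent.pair_iff.1 hab (u - 1) (u * t - s) <| by
    rw [show (u - 1) • a + (u * t - s) • b = u • (a + t • b) - (a + s • b) by module, hu,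
      sub_self]
  rw [sub_eq_zero.1 hu1, one_mul] at hts
  exact (sub_eq_zero.1 hts).symm

lemma affineChart_eq_affineChart_inv {t : ℂ} (ht : t ≠ 0) :
    affineChart hab t = affineChart (LinearIndependent.pair_symm_iff.1 hab) t⁻¹ :=
  (mk_eq_mk_iff' ℂ _ _ _ _).2 ⟨t, by rw [smul_add, smul_smul, mul_inv_cancel₀ ht]; module⟩

lemma range_affineChart_union :
    Set.range (affineChart hab) ∪ Set.range (affineChart (LinearIndependent.pair_symm_iff.1 hab))
      = {p | p.rep ∈ Submodule.span ℂ {a, b}} := by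
  have hba := LinearIndependent.pair_symm_iff.1 hab
  have hmem : ∀ s t : ℂ, s • a + t • b ∈ Submodule.span ℂ {a, b} := fun s t =>
    Submodule.mem_span_pair.2 ⟨s, t, rfl⟩
  ext p
  constructor
  · rintro (⟨t, rfl⟩ | ⟨t, rfl⟩)
    · obtain ⟨u, hu⟩ := exists_smul_eq_mk_rep ℂ _ (hab.pair_add_smul_ne_zero t)
      rw [affineChart, Set.mem_ofPred_eq, ← hu, Units.smul_def, smul_add, smul_smul]
      simpa using hmem u (u * t)
    · obtain ⟨u, hu⟩ := exists_smul_eq_mk_rep ℂ _ (hba.pair_add_smul_ne_zero t)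
      rw [affineChart, Set.mem_ofPred_eq, ← hu, Units.smul_def, smul_add, smul_smul, add_comm]
      exact hmem _ _
  · intro hp
    obtain ⟨s, t, hst⟩ := Submodule.mem_span_pair.1 hp
    rw [← p.mk_rep]
    by_cases hs : s = 0
    · refine Or.inr ⟨0, ((mk_eq_mk_iff' ℂ _ _ _ _).2 ⟨t, ?_⟩).symm⟩
      rw [← hst, hs]
      module
    · refine Or.inl ⟨t / s, ((mk_eq_mk_iff' ℂ _ _ _ _).2 ⟨s, ?_⟩).symm⟩
      rw [← hst, smul_add, smul_smul, mul_div_cancel₀ _ hs]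

end AffineChart

lemma isPathConnected_range_diff {X : Type*} [TopologicalSpace X] {ψ : ℂ → X}
    (hψ : Continuous ψ) (hinj : Function.Injective ψ) {F : Set X} (hF : F.Finite) :
    IsPathConnected (Set.range ψ \ F) := by
  rw [← Set.image_compl_preimage]
  have hrank : 1 < Module.rank ℝ ℂ := by rw [Complex.rank_real_complex]; norm_num
  exact ((hF.preimage hinj.injOn).countable.isPathConnected_compl_of_one_lt_rank hrank).image hψ

lemma isPreconnected_lineOf_diff {c : Fin 3 → ℂ} (hc : c ≠ 0) {F : Set CP2} (hF : F.Finite) :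
    IsPreconnected (lineOf c \ F) := by
  obtain ⟨a, b, hab, hline⟩ := exists_lineOf_eq_setOf_mem_span hc
  have hba := LinearIndependent.pair_symm_iff.1 hab
  obtain ⟨t, ht⟩ := (((Set.finite_singleton 0).union
    (hF.preimage (affineChart_injective hab).injOn)).infinite_compl).nonempty
  simp only [Set.mem_compl_iff, Set.mem_union, Set.mem_singleton_iff, Set.mem_preimage,
    not_or] at ht
  have hoverlap : affineChart hab t ∈ (Set.range (affineChart hab) \ F) ∩
      (Set.range (affineChart hba) \ F) :=
    ⟨⟨⟨t, rfl⟩, ht.2⟩, ⟨t⁻¹, (affineChart_eq_affineChart_inv hab ht.1).symm⟩, ht.2⟩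
  rw [hline, ← range_affineChart_union hab, Set.union_sdiff_distrib]
  exact ((isPathConnected_range_diff (continuous_affineChart hab) (affineChart_injective hab)
    hF).union (isPathConnected_range_diff (continuous_affineChart hba)
    (affineChart_injective hba) hF) ⟨_, hoverlap⟩).isConnected.isPreconnected

lemma lineOf_infinite {c : Fin 3 → ℂ} (hc : c ≠ 0) : (lineOf c).Infinite := by
  obtain ⟨a, b, hab, hline⟩ := exists_lineOf_eq_setOf_mem_span hc
  rw [hline, ← range_affineChart_union hab]
  exact (Set.infinite_range_of_injective (affineChart_injective hab)).mono Set.subset_union_left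

end Lines

section Arrangement

variable {X Y ι : Type*} [TopologicalSpace X] [TopologicalSpace Y]

def IsPreconnectedOffFinite (C : Set X) : Prop :=
  ∀ F : Set X, F.Finite → IsPreconnected (C \ F)

lemma IsPreconnectedOffFinite.image {C : Set X} (hC : IsPreconnectedOffFinite C) (f : X ≃ₜ Y) :
    IsPreconnectedOffFinite (f '' C) := fun F hF => by
  rw [← f.image_preimage F, ← Set.image_sdiff f.injective]
  exact (hC _ (hF.preimage f.injective.injOn)).image f f.continuous.continuousOn

structure IsArrangement (I : Finset ι) (L : ι → Set X) : Prop where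
  isClosed : ∀ i ∈ I, IsClosed (L i)
  infinite : ∀ i ∈ I, (L i).Infinite
  isPreconnectedOffFinite : ∀ i ∈ I, IsPreconnectedOffFinite (L i)
  finite_inter : ∀ i ∈ I, ∀ j ∈ I, i ≠ j → (L i ∩ L j).Finite

namespace IsArrangement

variable {I : Finset ι} {L : ι → Set X} {L' : ι → Set Y}

lemma eq_of_subset (hA : IsArrangement I L) {i j : ι} (hi : i ∈ I) (hj : j ∈ I)
    (h : L i ⊆ L j) : i = j := by
  by_contra hij
  have := hA.finite_inter i hi j hj hij
  rw [Set.inter_eq_left.2 h] at this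
  exact hA.infinite i hi this

lemma exists_subset_of_subset_biUnion (hA : IsArrangement I L) {C : Set X} (hCinf : C.Infinite)
    (hC : IsPreconnectedOffFinite C) (hCU : C ⊆ ⋃ i ∈ I, L i) : ∃ k ∈ I, C ⊆ L k := by
  classical
  set F := ⋃ i ∈ I, ⋃ j ∈ I, ⋃ (_ : i ≠ j), L i ∩ L j
  have hF : F.Finite := I.finite_toSet.biUnion fun i hi => I.finite_toSet.biUnion fun j hj =>
    Set.finite_iUnion fun hij => hA.finite_inter i hi j hj hij
  obtain ⟨x₀, hx₀C, hx₀F⟩ := (hCinf.sdiff hF).nonempty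
  obtain ⟨k, hk, hx₀k⟩ := Set.mem_iUnion₂.1 (hCU hx₀C)
  refine ⟨k, hk, fun q hq => ?_⟩
  by_contra hqk
  set M := ⋃ j ∈ I.erase k, L j
  have hM : IsClosed M :=
    isClosed_biUnion_finset fun j hj => hA.isClosed j (I.mem_of_mem_erase hj)
  have hcover : C ⊆ L k ∪ M := fun x hx => by
    obtain ⟨j, hj, hxj⟩ := Set.mem_iUnion₂.1 (hCU hx)
    by_cases hjk : j = k
    · exact Or.inl (hjk ▸ hxj)
    · exact Or.inr (Set.mem_biUnion (Finset.mem_erase.2 ⟨hjk, hj⟩) hxj)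
  have hqM : q ∈ M := (hcover hq).resolve_left hqk
  -- Once the multiple points other than `q` are removed, `C` still joins `x₀ ∈ L k` to `q ∈ M`,
  -- and the only point of `L k ∩ M` left to cross at is `q` itself.
  obtain ⟨y, ⟨hyC, hyF⟩, hyk, hyM⟩ := isPreconnected_closed_iff.1
    (hC (F \ {q}) hF.sdiff) (L k) M (hA.isClosed k hk) hM (fun x hx => hcover hx.1)
    ⟨x₀, ⟨hx₀C, fun h => hx₀F h.1⟩, hx₀k⟩ ⟨q, ⟨hq, fun h => h.2 rfl⟩, hqM⟩
  obtain ⟨j, hj, hyj⟩ := Set.mem_iUnion₂.1 hyM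
  have hyF' : y ∈ F := Set.mem_biUnion hk <| Set.mem_biUnion (I.mem_of_mem_erase hj) <|
    Set.mem_iUnion.2 ⟨(Finset.ne_of_mem_erase hj).symm, hyk, hyj⟩
  obtain rfl : y = q := by simpa [hyF'] using hyF
  exact hqk hyk

lemma exists_image_subset (hA : IsArrangement I L) (hA' : IsArrangement I L') (f : X ≃ₜ Y)
    (hf : f '' ⋃ i ∈ I, L i = ⋃ i ∈ I, L' i) {i : ι} (hi : i ∈ I) :
    ∃ j ∈ I, f '' L i ⊆ L' j :=
  hA'.exists_subset_of_subset_biUnion ((hA.infinite i hi).image f.injective.injOn)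
    ((hA.isPreconnectedOffFinite i hi).image f)
    (hf ▸ Set.image_mono (Set.subset_biUnion_of_mem (u := L) hi))

theorem exists_bijOn_image_eq (hA : IsArrangement I L) (hA' : IsArrangement I L') (f : X ≃ₜ Y)
    (hf : f '' ⋃ i ∈ I, L i = ⋃ i ∈ I, L' i) :
    ∃ σ : ι → ι, Set.BijOn σ I I ∧ ∀ i ∈ I, f '' L i = L' (σ i) := by
  have hf' : f.symm '' ⋃ i ∈ I, L' i = ⋃ i ∈ I, L i := by
    rw [← hf, f.image_symm, f.preimage_image]
  choose! σ hσI hσ using fun i (hi : i ∈ I) => hA.exists_image_subset hA' f hf hi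
  choose! τ hτI hτ using fun j (hj : j ∈ I) => hA'.exists_image_subset hA f.symm hf' hj
  have hτσ : Set.LeftInvOn τ σ I := fun i hi => by
    refine (hA.eq_of_subset hi (hτI _ (hσI i hi)) ?_).symm
    have := (Set.image_mono (hσ i hi)).trans (hτ _ (hσI i hi))
    rwa [f.image_symm, f.preimage_image] at this
  have hστ : Set.LeftInvOn σ τ I := fun j hj => by
    refine (hA'.eq_of_subset hj (hσI _ (hτI j hj)) ?_).symm
    have := (Set.image_mono (hτ j hj)).trans (hσ _ (hτI j hj))
    rwa [f.image_symm, f.image_preimage] at this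
  refine ⟨σ, Set.InvOn.bijOn ⟨hτσ, hστ⟩ hσI hτI, fun i hi => (hσ i hi).antisymm ?_⟩
  have := Set.image_mono (f := f) (hτ _ (hσI i hi))
  rwa [f.image_symm, f.image_preimage, hτσ hi] at this

end IsArrangement

end Arrangement

lemma isArrangement_of_isProjLine {ι : Type*} {I : Finset ι} {L : ι → Set CP2}
    (hL : ∀ i ∈ I, IsProjLine (L i)) (hne : ∀ i ∈ I, ∀ j ∈ I, i ≠ j → L i ≠ L j) :
    IsArrangement I L where
  isClosed i hi := by
    obtain ⟨c, -, hci⟩ := hL i hi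
    exact hci ▸ isClosed_lineOf c
  infinite i hi := by
    obtain ⟨c, hc, hci⟩ := hL i hi
    exact hci ▸ lineOf_infinite hc
  isPreconnectedOffFinite i hi := by
    obtain ⟨c, hc, hci⟩ := hL i hi
    exact hci ▸ fun F hF => isPreconnected_lineOf_diff hc hF
  finite_inter i hi j hj hij := by
    obtain ⟨c, hc, hci⟩ := hL i hi
    obtain ⟨c', hc', hcj⟩ := hL j hj
    have := hne i hi j hj hij
    rw [hci, hcj] at this ⊢
    exact (subsingleton_lineOf_inter hc hc' this).finite

section Combinatorics

open Finset

structure IsCombinatorics (P : Finset (Finset ℕ)) (n : ℕ) : Prop where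
  subset_Icc : ∀ S ∈ P, S ⊆ Icc 1 n
  one_lt_card : ∀ S ∈ P, 1 < S.card
  exists_mem_of_ne : ∀ i ∈ Icc 1 n, ∀ j ∈ Icc 1 n, i ≠ j → ∃ S ∈ P, i ∈ S ∧ j ∈ S

set_option maxRecDepth 100000 in
lemma isCombinatorics_K12points : IsCombinatorics K12points 12 :=
  ⟨by decide, by decide, by decide⟩

def IsAutomorphism (P : Finset (Finset ℕ)) (n : ℕ) (σ : ℕ → ℕ) : Prop :=
  Set.BijOn σ (Icc 1 n) (Icc 1 n) ∧ ∀ S ∈ P, S.image σ ∈ P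

lemma IsRealization.isAutomorphism {P : Finset (Finset ℕ)} {n : ℕ} {L L' : ℕ → Set CP2}
    (hr : IsRealization P n L) (hr' : IsRealization P n L') (hP : IsCombinatorics P n)
    {f : CP2 → CP2} (hf : Function.Injective f) {σ : ℕ → ℕ}
    (hσ : Set.BijOn σ (Icc 1 n) (Icc 1 n)) (hfσ : ∀ i ∈ Icc 1 n, f '' L i = L' (σ i)) :
    IsAutomorphism P n σ := by
  refine ⟨hσ, fun S hS => ?_⟩
  obtain ⟨i, hiS, j, hjS, hij⟩ := one_lt_card.1 (hP.one_lt_card S hS)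
  have hi := hP.subset_Icc S hS hiS
  have hj := hP.subset_Icc S hS hjS
  have hσij : σ i ≠ σ j := hσ.injOn.ne hi hj hij
  obtain ⟨S', hS', hiS', hjS'⟩ :=
    hP.exists_mem_of_ne _ (hσ.mapsTo hi) _ (hσ.mapsTo hj) hσij
  have hsub : ∀ k ∈ Icc 1 n, L' (σ i) ∩ L' (σ j) ⊆ L' (σ k) ↔ L i ∩ L j ⊆ L k :=
    fun k hk => by
      rw [← hfσ i hi, ← hfσ j hj, ← hfσ k hk, ← Set.image_inter hf,
        Set.image_subset_image_iff hf]
  suffices S.image σ = S' from this ▸ hS'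
  apply coe_injective
  rw [coe_image, ← hr.2 i hi j hj hij S hS hiS hjS,
    ← hr'.2 _ (hσ.mapsTo hi) _ (hσ.mapsTo hj) hσij S' hS' hiS' hjS']
  ext k'
  constructor
  · rintro ⟨k, ⟨hk, hksub⟩, rfl⟩
    exact ⟨hσ.mapsTo hk, (hsub k hk).2 hksub⟩
  · rintro ⟨hk', hsub'⟩
    obtain ⟨k, hk, rfl⟩ := hσ.surjOn hk'
    exact ⟨k, ⟨hk, (hsub k hk).1 hsub'⟩, rfl⟩

def incidenceProfile (P : Finset (Finset ℕ)) (s : Finset ℕ) : Multiset ℕ :=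
  (P.filter (s ⊆ ·)).val.map card

def signature (P : Finset (Finset ℕ)) (l : List ℕ) (y : ℕ) : List (Multiset ℕ) :=
  incidenceProfile P {y} :: l.map fun x => incidenceProfile P {y, x}

namespace IsAutomorphism

variable {P : Finset (Finset ℕ)} {n : ℕ} {σ : ℕ → ℕ}

lemma image_injOn (hσ : IsAutomorphism P n σ) (hP : ∀ S ∈ P, S ⊆ Icc 1 n) :
    Set.InjOn (image σ) P := fun _ hS _ hT h =>
  (image_eq_image_iff_of_injOn hσ.1.injOn (hP _ hS) (hP _ hT)).1 h

lemma image_image_eq (hσ : IsAutomorphism P n σ) (hP : ∀ S ∈ P, S ⊆ Icc 1 n) :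
    P.image (image σ) = P :=
  eq_of_subset_of_card_le (image_subset_iff.2 hσ.2)
    (card_image_of_injOn (hσ.image_injOn hP)).ge

lemma filter_superset_image (hσ : IsAutomorphism P n σ) (hP : ∀ S ∈ P, S ⊆ Icc 1 n)
    {s : Finset ℕ} (hs : s ⊆ Icc 1 n) :
    P.filter (s.image σ ⊆ ·) = (P.filter (s ⊆ ·)).image (image σ) := by
  ext T
  simp only [mem_filter, mem_image]
  constructor
  · rintro ⟨hT, hsT⟩
    rw [← hσ.image_image_eq hP] at hT
    obtain ⟨S, hS, rfl⟩ := mem_image.1 hT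
    exact ⟨S, ⟨hS, (image_subset_image_iff_of_injOn hσ.1.injOn hs (hP S hS)).1 hsT⟩, rfl⟩
  · rintro ⟨S, ⟨hS, hsS⟩, rfl⟩
    exact ⟨hσ.2 S hS, image_subset_image hsS⟩

lemma incidenceProfile_image (hσ : IsAutomorphism P n σ) (hP : ∀ S ∈ P, S ⊆ Icc 1 n)
    {s : Finset ℕ} (hs : s ⊆ Icc 1 n) :
    incidenceProfile P (s.image σ) = incidenceProfile P s := by
  rw [incidenceProfile, hσ.filter_superset_image hP hs,
    image_val_of_injOn ((hσ.image_injOn hP).mono (filter_subset _ _)), Multiset.map_map]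
  exact Multiset.map_congr rfl fun S hS =>
    card_image_of_injOn (hσ.1.injOn.mono (hP S (mem_filter.1 hS).1))

lemma signature_apply (hσ : IsAutomorphism P n σ) (hP : ∀ S ∈ P, S ⊆ Icc 1 n) {l : List ℕ}
    (hl : ∀ x ∈ l, x ∈ Icc 1 n ∧ σ x = x) {y : ℕ} (hy : y ∈ Icc 1 n) :
    signature P l (σ y) = signature P l y := by
  rw [signature, signature, ← image_singleton,
    hσ.incidenceProfile_image hP (singleton_subset_iff.2 hy)]
  congr 1
  refine List.map_congr_left fun x hx => ?_
  obtain ⟨hx, hσx⟩ := hl x hx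
  rw [← hσ.incidenceProfile_image hP (insert_subset hy (singleton_subset_iff.2 hx)),
    image_insert, image_singleton, hσx]

lemma apply_eq_self_of_signature (hσ : IsAutomorphism P n σ) (hP : ∀ S ∈ P, S ⊆ Icc 1 n)
    {l : List ℕ} (hl : ∀ x ∈ l, x ∈ Icc 1 n ∧ σ x = x) {x : ℕ} (hx : x ∈ Icc 1 n)
    (huniq : ∀ y ∈ Icc 1 n, signature P l y = signature P l x → y = x) : σ x = x :=
  huniq _ (hσ.1.mapsTo hx) (hσ.signature_apply hP hl hx)

end IsAutomorphism

set_option maxRecDepth 100000 in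
theorem IsAutomorphism.eq_id_K12points {σ : ℕ → ℕ} (hσ : IsAutomorphism K12points 12 σ) :
    ∀ i ∈ Icc 1 12, σ i = i := by
  have fix := fun l x hl hx huniq => hσ.apply_eq_self_of_signature
    isCombinatorics_K12points.subset_Icc (l := l) (x := x) hl hx huniq
  -- The point sizes on a line single out `7` and `11`; the points shared with `7` and `11`
  -- single out `2`; the points shared with `2`, `7` and `11` then tell all lines apart.
  have h7 : σ 7 = 7 := fix [] 7 (by simp) (by decide) (by decide)
  have h11 : σ 11 = 11 := fix [] 11 (by simp) (by decide) (by decide)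
  have h2 : σ 2 = 2 := fix [7, 11] 2 (by simp [h7, h11]) (by decide) (by decide)
  intro i hi
  exact fix [2, 7, 11] i (by simp [h2, h7, h11]) hi (by revert i; decide)

end Combinatorics

/-- If `𝔄 = {L₁,…,L₁₂}` and `𝔄' = {L'₁,…,L'₁₂}` are twelve-line arrangements in `ℂP²` both
realizing the combinatorics `𝔎`, then every homeomorphism of `ℂP²` mapping the union of the
lines of `𝔄` onto the union of the lines of `𝔄'` maps each line `Lᵢ` onto `L'ᵢ`: since the
automorphism group of `𝔎` is trivial, any homeomorphism of pairs between realizations of `𝔎`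
is automatically order-preserving. -/
theorem stmt17 (lines lines' : ℕ → Set CP2)
    (hline : ∀ i ∈ Finset.Icc 1 12, IsProjLine (lines i))
    (hline' : ∀ i ∈ Finset.Icc 1 12, IsProjLine (lines' i))
    (hr : IsRealization K12points 12 lines)
    (hr' : IsRealization K12points 12 lines')
    (f : CP2 ≃ₜ CP2)
    (hf : f '' (⋃ i ∈ Finset.Icc 1 12, lines i) = ⋃ i ∈ Finset.Icc 1 12, lines' i) :
    ∀ i ∈ Finset.Icc 1 12, f '' lines i = lines' i := by
  have hA := isArrangement_of_isProjLine hline hr.1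
  have hA' := isArrangement_of_isProjLine hline' hr'.1
  obtain ⟨σ, hσ, hfσ⟩ := hA.exists_bijOn_image_eq hA' f hf
  have hσid :=
    (hr.isAutomorphism hr' isCombinatorics_K12points f.injective hσ hfσ).eq_id_K12points
  intro i hi
  rw [hfσ i hi, hσid i hi]
end
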